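/- arXiv:2202.03684 — 5 statements merged into one kernel-verified Lean document; each statement's English description precedes it below -/
import Mathlib

section
/- Let f : ℝ^d × ℝ^n → ℝ be twice continuously differentiable and μ-strongly concave in y for some μ > 0. Define Φ(x) = max_y f(x,y) with unique maximizer y*(x). If a point x̄ is a strict saddle point of Φ (i.e., ∇Φ(x̄) = 0 and λ_min(∇²Φ(x̄)) < 0), then (x̄, y*(x̄)) is not a strict local Nash equilibrium of f, i.e., it is not the case that ∇²_{xx} f(x̄, y*(x̄)) ≻ 0 and ∇²_{yy} f(x̄, y*(x̄)) ≺ 0. -/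
/-!
Since `Φ x = max_y f x y`, the function `Φ - f (·, y*(x̄))` is nonnegative and vanishes at `x̄`,
so its Hessian at `x̄` is positive semidefinite: `∇²Φ(x̄) ⪰ ∇²ₓₓ f(x̄, y*(x̄))`. If
`∇²ₓₓ f(x̄, y*(x̄))` were positive definite, so would be `∇²Φ(x̄)`, contradicting the direction
of negative curvature of `Φ` at the strict saddle `x̄`.
-/

open scoped RealInnerProductSpace Topology

theorem IsLocalMin.deriv_deriv_nonneg {f : ℝ → ℝ} {x₀ : ℝ} (h : IsLocalMin f x₀)
    (hc : ContinuousAt f x₀) : 0 ≤ deriv (deriv f) x₀ := by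
  by_contra! hneg
  have hmax := isLocalMax_of_deriv_deriv_neg hneg h.deriv_eq_zero hc
  have hconst : f =ᶠ[𝓝 x₀] fun _ => f x₀ := (h.and hmax).mono fun _ hx => le_antisymm hx.2 hx.1
  have hderiv : deriv f =ᶠ[𝓝 x₀] fun _ => 0 :=
    hconst.eventuallyEq_nhds.mono fun _ hx => by rw [hx.deriv_eq, deriv_const]
  simp [hderiv.deriv_eq] at hneg

section

variable {E : Type*} [NormedAddCommGroup E] [InnerProductSpace ℝ E] [CompleteSpace E]

theorem IsLocalMin.inner_self_apply_nonneg {g : E → ℝ} {G : E → E} {H : E →L[ℝ] E} {x : E}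
    (h : IsLocalMin g x) (hg : ∀ y, HasGradientAt g (G y) y) (hG : HasFDerivAt G H x) (v : E) :
    0 ≤ ⟪v, H v⟫ := by
  have hline : ∀ t : ℝ, HasDerivAt (fun s : ℝ => x + s • v) v t := fun t => by
    simpa using ((hasDerivAt_id t).smul_const v).const_add x
  have hφ : ∀ t : ℝ, HasDerivAt (fun s => g (x + s • v)) ⟪v, G (x + t • v)⟫ t := fun t => by
    simpa [Function.comp_def, real_inner_comm] using
      (hg _).hasFDerivAt.comp_hasDerivAt t (hline t)
  have hφ' : HasDerivAt (fun s : ℝ => ⟪v, G (x + s • v)⟫) ⟪v, H v⟫ 0 := by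
    have hG' : HasFDerivAt G H (x + (0 : ℝ) • v) := by simpa using hG
    simpa [Function.comp_def] using
      (hasDerivAt_const _ v).inner ℝ (hG'.comp_hasDerivAt 0 (hline 0))
  have hmin : IsLocalMin (fun s : ℝ => g (x + s • v)) 0 :=
    IsLocalMin.comp_continuous (g := fun s : ℝ => x + s • v) (by simpa using h) (by fun_prop)
  have := hmin.deriv_deriv_nonneg (hφ 0).continuousAt
  rwa [funext fun t => (hφ t).deriv, hφ'.deriv] at this

theorem inner_self_apply_le_of_le_of_eq {g h : E → ℝ} {Gg Gh : E → E} {Hg Hh : E →L[ℝ] E}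
    {x : E} (hle : ∀ y, g y ≤ h y) (heq : g x = h x)
    (hGg : ∀ y, HasGradientAt g (Gg y) y) (hGh : ∀ y, HasGradientAt h (Gh y) y)
    (hHg : HasFDerivAt Gg Hg x) (hHh : HasFDerivAt Gh Hh x) (v : E) :
    ⟪v, Hg v⟫ ≤ ⟪v, Hh v⟫ := by
  have hmin : IsLocalMin (h - g) x := Filter.Eventually.of_forall fun y => by
    simp only [Pi.sub_apply, heq, sub_self, sub_nonneg, hle]
  have hgrad : ∀ y, HasGradientAt (h - g) (Gh y - Gg y) y := fun y => by
    rw [hasGradientAt_iff_hasFDerivAt, map_sub]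
    exact (hGh y).hasFDerivAt.sub (hGg y).hasFDerivAt
  have := hmin.inner_self_apply_nonneg hgrad (hHh.sub hHg) v
  rwa [sub_apply, inner_sub_right, sub_nonneg] at this

end

theorem stmt_0_general {d n : ℕ}
    (f : EuclideanSpace ℝ (Fin d) → EuclideanSpace ℝ (Fin n) → ℝ)
    (GX : EuclideanSpace ℝ (Fin d) → EuclideanSpace ℝ (Fin n) → EuclideanSpace ℝ (Fin d))
    (hGX : ∀ x y, HasGradientAt (fun x' => f x' y) (GX x y) x)
    (HXX : EuclideanSpace ℝ (Fin d) → EuclideanSpace ℝ (Fin n) →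
      EuclideanSpace ℝ (Fin d) →L[ℝ] EuclideanSpace ℝ (Fin d))
    (HYY : EuclideanSpace ℝ (Fin d) → EuclideanSpace ℝ (Fin n) →
      EuclideanSpace ℝ (Fin n) →L[ℝ] EuclideanSpace ℝ (Fin n))
    (hHXX : ∀ x y, HasFDerivAt (fun x' => GX x' y) (HXX x y) x)
    (ystar : EuclideanSpace ℝ (Fin d) → EuclideanSpace ℝ (Fin n))
    (hmax : ∀ x y, f x y ≤ f x (ystar x))
    (Φ : EuclideanSpace ℝ (Fin d) → ℝ) (hΦ : ∀ x, Φ x = f x (ystar x))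
    (gradΦ : EuclideanSpace ℝ (Fin d) → EuclideanSpace ℝ (Fin d))
    (hgradΦ : ∀ x, HasGradientAt Φ (gradΦ x) x)
    (HΦ : EuclideanSpace ℝ (Fin d) → EuclideanSpace ℝ (Fin d) →L[ℝ] EuclideanSpace ℝ (Fin d))
    (hHΦ : ∀ x, HasFDerivAt gradΦ (HΦ x) x)
    (xbar : EuclideanSpace ℝ (Fin d))
    (hneg : ∃ v : EuclideanSpace ℝ (Fin d), v ≠ 0 ∧ ⟪v, HΦ xbar v⟫ < 0) :
    ¬ ((∀ e : EuclideanSpace ℝ (Fin d), e ≠ 0 → 0 < ⟪e, HXX xbar (ystar xbar) e⟫) ∧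
        (∀ w : EuclideanSpace ℝ (Fin n), w ≠ 0 → ⟪w, HYY xbar (ystar xbar) w⟫ < 0)) := by
  rintro ⟨hxx, -⟩
  obtain ⟨v, hv0, hvneg⟩ := hneg
  have hle : ⟪v, HXX xbar (ystar xbar) v⟫ ≤ ⟪v, HΦ xbar v⟫ :=
    inner_self_apply_le_of_le_of_eq (fun x => (hmax x (ystar xbar)).trans (hΦ x).ge)
      (hΦ xbar).symm (fun x => hGX x (ystar xbar)) hgradΦ (hHXX xbar (ystar xbar)) (hHΦ xbar) v
  linarith [hxx v hv0]

theorem stmt_0 {d n : ℕ}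
    (f : EuclideanSpace ℝ (Fin d) → EuclideanSpace ℝ (Fin n) → ℝ)
    (μ : ℝ) (hμ : 0 < μ)
    (hconc : ∀ x, StrongConcaveOn Set.univ μ (f x))
    (GX : EuclideanSpace ℝ (Fin d) → EuclideanSpace ℝ (Fin n) → EuclideanSpace ℝ (Fin d))
    (GY : EuclideanSpace ℝ (Fin d) → EuclideanSpace ℝ (Fin n) → EuclideanSpace ℝ (Fin n))
    (hGX : ∀ x y, HasGradientAt (fun x' => f x' y) (GX x y) x)
    (hGY : ∀ x y, HasGradientAt (fun y' => f x y') (GY x y) y)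
    (HXX : EuclideanSpace ℝ (Fin d) → EuclideanSpace ℝ (Fin n) →
      EuclideanSpace ℝ (Fin d) →L[ℝ] EuclideanSpace ℝ (Fin d))
    (HXY : EuclideanSpace ℝ (Fin d) → EuclideanSpace ℝ (Fin n) →
      EuclideanSpace ℝ (Fin n) →L[ℝ] EuclideanSpace ℝ (Fin d))
    (HYX : EuclideanSpace ℝ (Fin d) → EuclideanSpace ℝ (Fin n) →
      EuclideanSpace ℝ (Fin d) →L[ℝ] EuclideanSpace ℝ (Fin n))
    (HYY : EuclideanSpace ℝ (Fin d) → EuclideanSpace ℝ (Fin n) →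
      EuclideanSpace ℝ (Fin n) →L[ℝ] EuclideanSpace ℝ (Fin n))
    (hHXX : ∀ x y, HasFDerivAt (fun x' => GX x' y) (HXX x y) x)
    (hHXY : ∀ x y, HasFDerivAt (fun y' => GX x y') (HXY x y) y)
    (hHYX : ∀ x y, HasFDerivAt (fun x' => GY x' y) (HYX x y) x)
    (hHYY : ∀ x y, HasFDerivAt (fun y' => GY x y') (HYY x y) y)
    -- twice *continuously* differentiable
    (hcontXX : Continuous fun p : EuclideanSpace ℝ (Fin d) × EuclideanSpace ℝ (Fin n) => HXX p.1 p.2)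
    (hcontXY : Continuous fun p : EuclideanSpace ℝ (Fin d) × EuclideanSpace ℝ (Fin n) => HXY p.1 p.2)
    (hcontYX : Continuous fun p : EuclideanSpace ℝ (Fin d) × EuclideanSpace ℝ (Fin n) => HYX p.1 p.2)
    (hcontYY : Continuous fun p : EuclideanSpace ℝ (Fin d) × EuclideanSpace ℝ (Fin n) => HYY p.1 p.2)
    (ystar : EuclideanSpace ℝ (Fin d) → EuclideanSpace ℝ (Fin n))
    (hmax : ∀ x y, f x y ≤ f x (ystar x))
    (Φ : EuclideanSpace ℝ (Fin d) → ℝ) (hΦ : ∀ x, Φ x = f x (ystar x))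
    (gradΦ : EuclideanSpace ℝ (Fin d) → EuclideanSpace ℝ (Fin d))
    (hgradΦ : ∀ x, HasGradientAt Φ (gradΦ x) x)
    (HΦ : EuclideanSpace ℝ (Fin d) → EuclideanSpace ℝ (Fin d) →L[ℝ] EuclideanSpace ℝ (Fin d))
    (hHΦ : ∀ x, HasFDerivAt gradΦ (HΦ x) x)
    (xbar : EuclideanSpace ℝ (Fin d))
    (hfo : gradΦ xbar = 0)
    (hneg : ∃ v : EuclideanSpace ℝ (Fin d), v ≠ 0 ∧ ⟪v, HΦ xbar v⟫ < 0) :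
    ¬ ((∀ e : EuclideanSpace ℝ (Fin d), e ≠ 0 → 0 < ⟪e, HXX xbar (ystar xbar) e⟫) ∧
        (∀ w : EuclideanSpace ℝ (Fin n), w ≠ 0 → ⟪w, HYY xbar (ystar xbar) w⟫ < 0)) :=
  stmt_0_general f GX hGX HXX HYY hHXX ystar hmax Φ hΦ gradΦ hgradΦ HΦ hHΦ xbar hneg
end

section
/- Let f : ℝ^d × ℝ^n → ℝ be twice continuously differentiable and μ-strongly concave in y, and let Φ(x) = max_y f(x,y) with maximizer y*(x). If (x̄, ȳ) is a strict local Nash equilibrium of f (so ∇f(x̄,ȳ)=0, ∇²_{xx} f(x̄,ȳ) ≻ 0, ∇²_{yy} f(x̄,ȳ) ≺ 0), then ȳ = y*(x̄) and ∇²Φ(x̄) ≻ 0; in particular x̄ is a strict local minimum of Φ. -/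
/-!
Strong concavity makes the critical point `ȳ` of `f x̄` its unique maximiser, so `ȳ = y*(x̄)`.
Hence `Φ ≥ f · ȳ` with equality at `x̄`: the gap `Φ - f · ȳ` is minimal at `x̄`, which gives
`∇²Φ(x̄) ⪰ ∇²ₓₓ f(x̄, ȳ) ≻ 0` without computing the Schur complement. For the same reason the
strict local minimum of `f · ȳ` at `x̄` (a critical point with positive definite Hessian) is one
of `Φ` as well.
-/

open scoped RealInnerProductSpace
open InnerProductSpace Filter Set Topology

theorem ConcaveOn.isMaxOn_of_hasFDerivAt_zero {E : Type*} [NormedAddCommGroup E]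
    [NormedSpace ℝ E] {g : E → ℝ} (hg : ConcaveOn ℝ univ g) {y₀ : E}
    (hy₀ : HasFDerivAt g (0 : E →L[ℝ] ℝ) y₀) : IsMaxOn g univ y₀ := by
  intro y _
  have hline : HasDerivAt (g ∘ AffineMap.lineMap y₀ y) 0 (0 : ℝ) := by
    rw [← AffineMap.lineMap_apply_zero (k := ℝ) y₀ y] at hy₀
    simpa using hy₀.comp_hasDerivAt (0 : ℝ) AffineMap.hasDerivAt_lineMap
  have := (hg.comp_affineMap (AffineMap.lineMap y₀ y)).slope_le_of_hasDerivAt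
    (mem_univ 0) (mem_univ 1) one_pos hline
  simpa [slope_def_field] using this

theorem ContinuousLinearMap.exists_pos_mul_sq_norm_le_inner_apply_self {E : Type*}
    [NormedAddCommGroup E] [InnerProductSpace ℝ E] [FiniteDimensional ℝ E] (A : E →L[ℝ] E)
    (hA : ∀ v, v ≠ 0 → 0 < ⟪v, A v⟫) : ∃ m > 0, ∀ v, m * ‖v‖ ^ 2 ≤ ⟪v, A v⟫ := by
  rcases subsingleton_or_nontrivial E with _ | _
  · exact ⟨1, one_pos, fun v => by simp [Subsingleton.elim v 0]⟩
  obtain ⟨u, hu, humin⟩ := (isCompact_sphere (0 : E) 1).exists_isMinOn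
    (NormedSpace.sphere_nonempty.mpr zero_le_one)
    (continuous_id.inner (𝕜 := ℝ) A.continuous).continuousOn
  have hu₁ : ‖u‖ = 1 := mem_sphere_zero_iff_norm.mp hu
  refine ⟨⟪u, A u⟫, hA u (ne_zero_of_norm_ne_zero (by simp [hu₁])), fun v => ?_⟩
  rcases eq_or_ne v 0 with rfl | hv
  · simp
  have hv' : 0 < ‖v‖ := norm_pos_iff.mpr hv
  have hmin : ⟪u, A u⟫ ≤ ⟪‖v‖⁻¹ • v, A (‖v‖⁻¹ • v)⟫ :=
    humin (by simp [norm_smul, hv'.ne'])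
  rw [map_smul, real_inner_smul_left, real_inner_smul_right] at hmin
  calc ⟪u, A u⟫ * ‖v‖ ^ 2 ≤ ‖v‖⁻¹ * (‖v‖⁻¹ * ⟪v, A v⟫) * ‖v‖ ^ 2 := by gcongr
    _ = ⟪v, A v⟫ := by field_simp

section SecondOrder

variable {E : Type*} [NormedAddCommGroup E] [InnerProductSpace ℝ E] [CompleteSpace E]

theorem HasGradientAt.hasDerivAt_comp_add_smul {g : E → ℝ} {G x₀ v : E} {t : ℝ}
    (hg : HasGradientAt g G (x₀ + t • v)) :
    HasDerivAt (fun t : ℝ => g (x₀ + t • v)) ⟪G, v⟫ t := by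
  have hline : HasDerivAt (fun t : ℝ => x₀ + t • v) v t := by
    simpa using ((hasDerivAt_id t).smul_const v).const_add x₀
  simpa [toDual_apply_apply, Function.comp_def] using hg.hasFDerivAt.comp_hasDerivAt t hline

theorem exists_mem_Ioo_inner_gradient_eq_sub {g : E → ℝ} {G : E → E}
    (hG : ∀ x, HasGradientAt g (G x) x) (x₀ w : E) :
    ∃ c ∈ Ioo (0 : ℝ) 1, g (x₀ + w) - g x₀ = ⟪G (x₀ + c • w), w⟫ := by
  have hd : ∀ t : ℝ, HasDerivAt (fun t : ℝ => g (x₀ + t • w)) ⟪G (x₀ + t • w), w⟫ t :=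
    fun t => (hG _).hasDerivAt_comp_add_smul
  obtain ⟨c, hc, hceq⟩ := exists_hasDerivAt_eq_slope _ _ zero_lt_one
    (fun t _ => (hd t).continuousAt.continuousWithinAt) (fun t _ => hd t)
  exact ⟨c, hc, by simpa using hceq.symm⟩

/-- A second-order expansion whose remainder is scaled by the mean-value point `c`, so that for
small `w` the sign of `g (x₀ + w) - g x₀` is governed by `⟪w, H w⟫`. -/
theorem eventually_abs_sub_sub_inner_le_of_hasGradientAt {g : E → ℝ} {G : E → E}
    {H : E →L[ℝ] E} {x₀ : E} (hG : ∀ x, HasGradientAt g (G x) x) (hH : HasFDerivAt G H x₀)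
    (hG₀ : G x₀ = 0) {ε : ℝ} (hε : 0 < ε) :
    ∀ᶠ w in 𝓝 0, ∃ c ∈ Ioo (0 : ℝ) 1,
      |g (x₀ + w) - g x₀ - c * ⟪w, H w⟫| ≤ c * (ε * ‖w‖ ^ 2) := by
  have hlin : ∀ᶠ u in 𝓝 (0 : E), ‖G (x₀ + u) - H u‖ ≤ ε * ‖u‖ := by
    simpa [hG₀] using (hasFDerivAt_iff_isLittleO_nhds_zero.mp hH).def hε
  obtain ⟨δ, hδ, hball⟩ := Metric.eventually_nhds_iff_ball.mp hlin
  filter_upwards [Metric.ball_mem_nhds 0 hδ] with w hw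
  obtain ⟨c, hc, hsub⟩ := exists_mem_Ioo_inner_gradient_eq_sub hG x₀ w
  have hcw : ‖c • w‖ = c * ‖w‖ := by rw [norm_smul, Real.norm_of_nonneg hc.1.le]
  have hrem := hball (c • w) <| mem_ball_zero_iff.mpr <| by
    rw [hcw]; exact (mul_le_of_le_one_left (norm_nonneg w) hc.2.le).trans_lt
      (mem_ball_zero_iff.mp hw)
  refine ⟨c, hc, ?_⟩
  calc |g (x₀ + w) - g x₀ - c * ⟪w, H w⟫| = |⟪G (x₀ + c • w) - H (c • w), w⟫| := by
        rw [hsub, inner_sub_left, map_smul, real_inner_smul_left, real_inner_comm w,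
          real_inner_comm w]
    _ ≤ ‖G (x₀ + c • w) - H (c • w)‖ * ‖w‖ := abs_real_inner_le_norm _ _
    _ ≤ ε * ‖c • w‖ * ‖w‖ := by gcongr
    _ = c * (ε * ‖w‖ ^ 2) := by rw [hcw]; ring

theorem IsLocalMin.inner_apply_self_nonneg_of_hasGradientAt {g : E → ℝ} {G : E → E}
    {H : E →L[ℝ] E} {x₀ : E} (hmin : IsLocalMin g x₀) (hG : ∀ x, HasGradientAt g (G x) x)
    (hH : HasFDerivAt G H x₀) (v : E) : 0 ≤ ⟪v, H v⟫ := by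
  have hG₀ : G x₀ = 0 := by
    simpa using hmin.hasFDerivAt_eq_zero (hG x₀).hasFDerivAt
  have hmin' : ∀ᶠ w in 𝓝 (0 : E), g x₀ ≤ g (x₀ + w) :=
    ((continuous_const.add continuous_id).tendsto' 0 x₀ (add_zero x₀)).eventually hmin
  have hray : Tendsto (fun t : ℝ => t • v) (𝓝[>] 0) (𝓝 0) :=
    tendsto_nhdsWithin_of_tendsto_nhds
      ((continuous_id.smul continuous_const).tendsto' 0 0 (zero_smul ℝ v))
  refine le_of_forall_pos_le_add fun ε hε => ?_
  set η := ε / (‖v‖ ^ 2 + 1)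
  have hη : 0 < η := by positivity
  obtain ⟨t, ⟨⟨c, hc, hbound⟩, hle⟩, ht⟩ :=
    ((hray.eventually ((eventually_abs_sub_sub_inner_le_of_hasGradientAt hG hH hG₀ hη).and
      hmin')).and self_mem_nhdsWithin).exists
  have hηv : η * ‖v‖ ^ 2 ≤ ε := by
    rw [div_mul_eq_mul_div, div_le_iff₀ (by positivity)]; nlinarith [sq_nonneg ‖v‖]
  simp only [map_smul, real_inner_smul_left, real_inner_smul_right, norm_smul,
    Real.norm_of_nonneg (le_of_lt ht)] at hbound
  have hgap : 0 ≤ c * t ^ 2 * (⟪v, H v⟫ + η * ‖v‖ ^ 2) := by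
    nlinarith [abs_le.mp hbound]
  have hnonneg := (mul_nonneg_iff_of_pos_left (mul_pos hc.1 (pow_pos ht 2))).mp hgap
  linarith

theorem eventually_nhdsNE_lt_of_hasGradientAt_of_inner_pos [FiniteDimensional ℝ E] {g : E → ℝ}
    {G : E → E} {H : E →L[ℝ] E} {x₀ : E} (hG : ∀ x, HasGradientAt g (G x) x)
    (hH : HasFDerivAt G H x₀) (hG₀ : G x₀ = 0) (hpos : ∀ v, v ≠ 0 → 0 < ⟪v, H v⟫) :
    ∀ᶠ x in 𝓝[≠] x₀, g x₀ < g x := by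
  obtain ⟨m, hm, hcoer⟩ := H.exists_pos_mul_sq_norm_le_inner_apply_self hpos
  have hkey := ((continuous_sub_right x₀).tendsto' x₀ 0 (sub_self x₀)).eventually
    (eventually_abs_sub_sub_inner_le_of_hasGradientAt hG hH hG₀ (half_pos hm))
  filter_upwards [nhdsWithin_le_nhds hkey, self_mem_nhdsWithin] with x ⟨c, hc, hbound⟩ hx
  rw [add_sub_cancel] at hbound
  have hw : 0 < ‖x - x₀‖ := norm_pos_iff.mpr (sub_ne_zero.mpr hx)
  nlinarith [abs_le.mp hbound, mul_pos hc.1 (pow_pos hw 2),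
    mul_le_mul_of_nonneg_left (hcoer (x - x₀)) hc.1.le]

end SecondOrder

theorem stmt_1_general {d n : ℕ}
    (f : EuclideanSpace ℝ (Fin d) → EuclideanSpace ℝ (Fin n) → ℝ)
    (μ : ℝ) (hμ : 0 < μ)
    (hconc : ∀ x, StrongConcaveOn Set.univ μ (f x))
    (GX : EuclideanSpace ℝ (Fin d) → EuclideanSpace ℝ (Fin n) → EuclideanSpace ℝ (Fin d))
    (GY : EuclideanSpace ℝ (Fin d) → EuclideanSpace ℝ (Fin n) → EuclideanSpace ℝ (Fin n))
    (hGX : ∀ x y, HasGradientAt (fun x' => f x' y) (GX x y) x)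
    (hGY : ∀ x y, HasGradientAt (fun y' => f x y') (GY x y) y)
    (HXX : EuclideanSpace ℝ (Fin d) → EuclideanSpace ℝ (Fin n) →
      EuclideanSpace ℝ (Fin d) →L[ℝ] EuclideanSpace ℝ (Fin d))
    (hHXX : ∀ x y, HasFDerivAt (fun x' => GX x' y) (HXX x y) x)
    (ystar : EuclideanSpace ℝ (Fin d) → EuclideanSpace ℝ (Fin n))
    (hmax : ∀ x y, f x y ≤ f x (ystar x))
    (Φ : EuclideanSpace ℝ (Fin d) → ℝ) (hΦ : ∀ x, Φ x = f x (ystar x))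
    (gradΦ : EuclideanSpace ℝ (Fin d) → EuclideanSpace ℝ (Fin d))
    (hgradΦ : ∀ x, HasGradientAt Φ (gradΦ x) x)
    (HΦ : EuclideanSpace ℝ (Fin d) → EuclideanSpace ℝ (Fin d) →L[ℝ] EuclideanSpace ℝ (Fin d))
    (hHΦ : ∀ x, HasFDerivAt gradΦ (HΦ x) x)
    (xbar : EuclideanSpace ℝ (Fin d)) (ybar : EuclideanSpace ℝ (Fin n))
    -- strict local Nash equilibrium at (xbar, ybar)
    (hfoX : GX xbar ybar = 0) (hfoY : GY xbar ybar = 0)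
    (hXXpos : ∀ e : EuclideanSpace ℝ (Fin d), e ≠ 0 → 0 < ⟪e, HXX xbar ybar e⟫) :
    ybar = ystar xbar ∧
      (∀ v : EuclideanSpace ℝ (Fin d), v ≠ 0 → 0 < ⟪v, HΦ xbar v⟫) ∧
      ∃ ε > (0 : ℝ), ∀ x, x ≠ xbar → ‖x - xbar‖ < ε → Φ xbar < Φ x := by
  have hybar : ybar = ystar xbar := by
    have hcrit : HasFDerivAt (f xbar) (0 : EuclideanSpace ℝ (Fin n) →L[ℝ] ℝ) ybar := by
      simpa [hfoY] using (hGY xbar ybar).hasFDerivAt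
    exact ((hconc xbar).strictConcaveOn hμ).eq_of_isMaxOn
      (((hconc xbar).strictConcaveOn hμ).concaveOn.isMaxOn_of_hasFDerivAt_zero hcrit)
      (fun y _ => hmax xbar y) (mem_univ _) (mem_univ _)
  have hΦbar : Φ xbar = f xbar ybar := by rw [hΦ, hybar]
  have hgap : IsLocalMin (fun x => Φ x - f x ybar) xbar :=
    Filter.Eventually.of_forall fun x => by
      simp only [hΦbar, sub_self, sub_nonneg, hΦ x]
      exact hmax x ybar
  refine ⟨hybar, fun v hv => ?_, ?_⟩
  · have hgrad : ∀ x, HasGradientAt (fun x => Φ x - f x ybar) (gradΦ x - GX x ybar) x := by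
      intro x
      rw [hasGradientAt_iff_hasFDerivAt, map_sub]
      exact (hgradΦ x).hasFDerivAt.sub (hGX x ybar).hasFDerivAt
    have hgap₂ := hgap.inner_apply_self_nonneg_of_hasGradientAt hgrad
      ((hHΦ xbar).sub (hHXX xbar ybar)) v
    rw [sub_apply, inner_sub_right, sub_nonneg] at hgap₂
    exact (hXXpos v hv).trans_le hgap₂
  · obtain ⟨ε, hε, hlt⟩ := Metric.mem_nhdsWithin_iff.mp
      (eventually_nhdsNE_lt_of_hasGradientAt_of_inner_pos (fun x => hGX x ybar)
        (hHXX xbar ybar) hfoX hXXpos)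
    refine ⟨ε, hε, fun x hx hxε => ?_⟩
    calc Φ xbar = f xbar ybar := hΦbar
      _ < f x ybar := hlt ⟨mem_ball_iff_norm.mpr hxε, hx⟩
      _ ≤ Φ x := (hΦ x).symm ▸ hmax x ybar

theorem stmt_1 {d n : ℕ}
    (f : EuclideanSpace ℝ (Fin d) → EuclideanSpace ℝ (Fin n) → ℝ)
    (μ : ℝ) (hμ : 0 < μ)
    (hconc : ∀ x, StrongConcaveOn Set.univ μ (f x))
    (GX : EuclideanSpace ℝ (Fin d) → EuclideanSpace ℝ (Fin n) → EuclideanSpace ℝ (Fin d))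
    (GY : EuclideanSpace ℝ (Fin d) → EuclideanSpace ℝ (Fin n) → EuclideanSpace ℝ (Fin n))
    (hGX : ∀ x y, HasGradientAt (fun x' => f x' y) (GX x y) x)
    (hGY : ∀ x y, HasGradientAt (fun y' => f x y') (GY x y) y)
    (HXX : EuclideanSpace ℝ (Fin d) → EuclideanSpace ℝ (Fin n) →
      EuclideanSpace ℝ (Fin d) →L[ℝ] EuclideanSpace ℝ (Fin d))
    (HXY : EuclideanSpace ℝ (Fin d) → EuclideanSpace ℝ (Fin n) →
      EuclideanSpace ℝ (Fin n) →L[ℝ] EuclideanSpace ℝ (Fin d))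
    (HYX : EuclideanSpace ℝ (Fin d) → EuclideanSpace ℝ (Fin n) →
      EuclideanSpace ℝ (Fin d) →L[ℝ] EuclideanSpace ℝ (Fin n))
    (HYY : EuclideanSpace ℝ (Fin d) → EuclideanSpace ℝ (Fin n) →
      EuclideanSpace ℝ (Fin n) →L[ℝ] EuclideanSpace ℝ (Fin n))
    (hHXX : ∀ x y, HasFDerivAt (fun x' => GX x' y) (HXX x y) x)
    (hHXY : ∀ x y, HasFDerivAt (fun y' => GX x y') (HXY x y) y)
    (hHYX : ∀ x y, HasFDerivAt (fun x' => GY x' y) (HYX x y) x)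
    (hHYY : ∀ x y, HasFDerivAt (fun y' => GY x y') (HYY x y) y)
    -- twice *continuously* differentiable
    (hcontXX : Continuous fun p : EuclideanSpace ℝ (Fin d) × EuclideanSpace ℝ (Fin n) => HXX p.1 p.2)
    (hcontXY : Continuous fun p : EuclideanSpace ℝ (Fin d) × EuclideanSpace ℝ (Fin n) => HXY p.1 p.2)
    (hcontYX : Continuous fun p : EuclideanSpace ℝ (Fin d) × EuclideanSpace ℝ (Fin n) => HYX p.1 p.2)
    (hcontYY : Continuous fun p : EuclideanSpace ℝ (Fin d) × EuclideanSpace ℝ (Fin n) => HYY p.1 p.2)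
    (ystar : EuclideanSpace ℝ (Fin d) → EuclideanSpace ℝ (Fin n))
    (hmax : ∀ x y, f x y ≤ f x (ystar x))
    (Φ : EuclideanSpace ℝ (Fin d) → ℝ) (hΦ : ∀ x, Φ x = f x (ystar x))
    (gradΦ : EuclideanSpace ℝ (Fin d) → EuclideanSpace ℝ (Fin d))
    (hgradΦ : ∀ x, HasGradientAt Φ (gradΦ x) x)
    (HΦ : EuclideanSpace ℝ (Fin d) → EuclideanSpace ℝ (Fin d) →L[ℝ] EuclideanSpace ℝ (Fin d))
    (hHΦ : ∀ x, HasFDerivAt gradΦ (HΦ x) x)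
    (xbar : EuclideanSpace ℝ (Fin d)) (ybar : EuclideanSpace ℝ (Fin n))
    -- strict local Nash equilibrium at (xbar, ybar)
    (hfoX : GX xbar ybar = 0) (hfoY : GY xbar ybar = 0)
    (hXXpos : ∀ e : EuclideanSpace ℝ (Fin d), e ≠ 0 → 0 < ⟪e, HXX xbar ybar e⟫)
    (hYYneg : ∀ w : EuclideanSpace ℝ (Fin n), w ≠ 0 → ⟪w, HYY xbar ybar w⟫ < 0) :
    ybar = ystar xbar ∧
      (∀ v : EuclideanSpace ℝ (Fin d), v ≠ 0 → 0 < ⟪v, HΦ xbar v⟫) ∧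
      ∃ ε > (0 : ℝ), ∀ x, x ≠ xbar → ‖x - xbar‖ < ε → Φ xbar < Φ x :=
  stmt_1_general f μ hμ hconc GX GY hGX hGY HXX hHXX ystar hmax Φ hΦ gradΦ hgradΦ HΦ hHΦ xbar ybar
    hfoX hfoY hXXpos
end

section
/- Let f : ℝ^d × ℝ^n → ℝ be twice continuously differentiable and μ-strongly concave in y. A point (x̄, ȳ) is a strict local minimax point of f (i.e., ∇f(x̄,ȳ)=0, ∇²_{yy} f(x̄,ȳ) ≺ 0, and ∇²_{xx} f − ∇²_{xy} f (∇²_{yy} f)^{-1} ∇²_{yx} f ≻ 0 at (x̄,ȳ)) if and only if x̄ satisfies ∇Φ(x̄) = 0 and ∇²Φ(x̄) ≻ 0, where Φ(x) = max_y f(x,y) and ȳ = y*(x̄) is the unique maximizer. -/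
/-!
Strong concavity makes `∇_y f (x, ·)` strongly monotone, so the maximiser `y* x` is the zero of
`∇_y f (x, ·)`, depends on `x` in a pointwise Lipschitz way, and `∇²_yy f ≤ -μ`. Since
`Φ ≥ f (·, y* x)` with equality at `x`, the gradients agree there (Danskin). The mean value
inequality, together with continuity of the `y`-derivatives, lets one differentiate
`∇_y f (x, y* x) = 0` and `x ↦ ∇_x f (x, y* x)` at `x̄` knowing only that `y*` is pointwise
Lipschitz: this gives `Dy* = -(∇²_yy f)⁻¹ ∇²_yx f` and then `∇²Φ` as the Schur complement.
-/

open scoped RealInnerProductSpace Topology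
open Filter Asymptotics Set

theorem IsLocalMinOn.hasDerivWithinAt_Ici_nonneg {φ : ℝ → ℝ} {a φ' : ℝ}
    (h : IsLocalMinOn φ (Ici a) a) (hφ : HasDerivWithinAt φ φ' (Ici a) a) : 0 ≤ φ' := by
  have h1 : (1 : ℝ) ∈ posTangentConeAt (Ici a) a :=
    mem_posTangentConeAt_of_segment_subset (by simp [segment_eq_Icc, Icc_subset_Ici_self])
  simpa using h.hasFDerivWithinAt_nonneg hφ.hasFDerivWithinAt h1

section Gradient

variable {F : Type*} [NormedAddCommGroup F] [InnerProductSpace ℝ F] [CompleteSpace F]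

theorem IsLocalMax.hasGradientAt_eq_zero {g : F → ℝ} {G y : F} (h : IsLocalMax g y)
    (hG : HasGradientAt g G y) : G = 0 :=
  (InnerProductSpace.toDual ℝ F).map_eq_zero_iff.mp (h.hasFDerivAt_eq_zero hG.hasFDerivAt)

theorem HasGradientAt.eq_of_eventuallyLE_of_eq {g h : F → ℝ} {a b x : F}
    (hg : HasGradientAt g a x) (hh : HasGradientAt h b x) (hle : h ≤ᶠ[𝓝 x] g)
    (heq : h x = g x) : a = b := by
  have hmin : IsLocalMin (fun x' => g x' - h x') x :=
    hle.mono fun x' hx' => by simpa [heq] using hx'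
  have := hmin.hasFDerivAt_eq_zero (hg.hasFDerivAt.sub hh.hasFDerivAt)
  rw [← map_sub, LinearIsometryEquiv.map_eq_zero_iff, sub_eq_zero] at this
  exact this

end Gradient

namespace StrongConcaveOn

variable {F : Type*} [NormedAddCommGroup F] [InnerProductSpace ℝ F] [CompleteSpace F]
  {g : F → ℝ} {μ : ℝ}

theorem sub_add_le_inner_gradient (hc : StrongConcaveOn univ μ g) {x y G : F}
    (hG : HasGradientAt g G x) : g y - g x + μ / 2 * ‖y - x‖ ^ 2 ≤ ⟪G, y - x⟫ := by
  set c := g y - g x + μ / 2 * ‖y - x‖ ^ 2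
  -- strong concavity on the segment `[x, y]` says exactly `ψ 0 ≤ ψ t` for `t ∈ [0, 1]`
  let ψ : ℝ → ℝ := fun t => g (x + t • (y - x)) - t * c + t ^ 2 * (μ / 2 * ‖y - x‖ ^ 2)
  have hψ : HasDerivAt ψ (⟪G, y - x⟫ - c) 0 := by
    have hline : HasDerivAt (fun t : ℝ => g (x + t • (y - x))) ⟪G, y - x⟫ 0 :=
      hG.hasFDerivAt.hasLineDerivAt (y - x)
    exact ((hline.sub ((hasDerivAt_id 0).mul_const c)).add
      ((hasDerivAt_pow 2 0).mul_const (μ / 2 * ‖y - x‖ ^ 2))).congr_deriv (by simp)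
  have hmin : IsLocalMinOn ψ (Ici 0) 0 := by
    filter_upwards [inter_mem_nhdsWithin (Ici 0) (Iio_mem_nhds one_pos)] with t ⟨ht0, ht1⟩
    have key := hc.2 (mem_univ y) (mem_univ x) ht0 (sub_nonneg.mpr ht1.le) (add_sub_cancel t 1)
    have hpt : t • y + (1 - t) • x = x + t • (y - x) := by module
    simp only [hpt, smul_eq_mul] at key
    simp only [ψ, c, zero_smul, add_zero]
    linarith
  simpa using hmin.hasDerivWithinAt_Ici_nonneg hψ.hasDerivWithinAt

theorem inner_gradient_sub_le (hc : StrongConcaveOn univ μ g) {x y Gx Gy : F}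
    (hGx : HasGradientAt g Gx x) (hGy : HasGradientAt g Gy y) :
    ⟪Gy - Gx, y - x⟫ ≤ -(μ * ‖y - x‖ ^ 2) := by
  have hxy := hc.sub_add_le_inner_gradient hGx (y := y)
  have hyx := hc.sub_add_le_inner_gradient hGy (y := x)
  rw [← neg_sub y x, norm_neg, inner_neg_right] at hyx
  rw [inner_sub_left]
  linarith

theorem mul_norm_sub_le_norm_gradient (hc : StrongConcaveOn univ μ g) {y₀ y G : F}
    (hy₀ : HasGradientAt g 0 y₀) (hy : HasGradientAt g G y) : μ * ‖y - y₀‖ ≤ ‖G‖ := by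
  have hmono := hc.inner_gradient_sub_le hy₀ hy
  rw [sub_zero] at hmono
  rcases (norm_nonneg (y - y₀)).eq_or_lt with h | h
  · simp [← h]
  · refine le_of_mul_le_mul_right ?_ h
    nlinarith [neg_le_of_abs_le (abs_real_inner_le_norm G (y - y₀))]

theorem inner_hessian_le {G : F → F} (hc : StrongConcaveOn univ μ g)
    (hG : ∀ y, HasGradientAt g (G y) y) {y₀ : F} {H : F →L[ℝ] F} (hH : HasFDerivAt G H y₀)
    (w : F) : ⟪w, H w⟫ ≤ -(μ * ‖w‖ ^ 2) := by
  -- strong monotonicity of `-G` along the ray `y₀ + t • w` says `ψ 0 ≤ ψ t` for `t ≥ 0`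
  let ψ : ℝ → ℝ := fun t => -(⟪w, G (y₀ + t • w)⟫ + t * (μ * ‖w‖ ^ 2))
  have hψ : HasDerivAt ψ (-(⟪w, H w⟫ + μ * ‖w‖ ^ 2)) 0 := by
    have hline : HasDerivAt (fun t : ℝ => G (y₀ + t • w)) (H w) 0 := hH.hasLineDerivAt w
    exact ((((innerSL ℝ w).hasFDerivAt.comp_hasDerivAt 0 hline).add
      ((hasDerivAt_id 0).mul_const (μ * ‖w‖ ^ 2))).neg).congr_deriv (by simp)
  have hmin : IsLocalMinOn ψ (Ici 0) 0 := by
    filter_upwards [self_mem_nhdsWithin] with t (ht : 0 ≤ t)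
    have hmono := hc.inner_gradient_sub_le (hG y₀) (hG (y₀ + t • w))
    rw [add_sub_cancel_left, inner_smul_right, norm_smul, Real.norm_of_nonneg ht,
      real_inner_comm, inner_sub_right] at hmono
    rcases ht.eq_or_lt with rfl | ht
    · simp [ψ]
    have : ⟪w, G (y₀ + t • w)⟫ - ⟪w, G y₀⟫ ≤ -(t * (μ * ‖w‖ ^ 2)) :=
      le_of_mul_le_mul_left (by linarith) ht
    simp only [ψ, zero_smul, add_zero, zero_mul]
    linarith
  linarith [hmin.hasDerivWithinAt_Ici_nonneg hψ.hasDerivWithinAt]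

end StrongConcaveOn

theorem isBigO_sub_of_strongConcaveOn {X Y : Type*} [NormedAddCommGroup X] [NormedSpace ℝ X]
    [NormedAddCommGroup Y] [InnerProductSpace ℝ Y] [CompleteSpace Y] {f : X → Y → ℝ}
    {ystar : X → Y} {GY : X → Y → Y} {μ : ℝ} {x₀ : X} {A : X →L[ℝ] Y} (hμ : 0 < μ)
    (hconc : ∀ x, StrongConcaveOn univ μ (f x)) (hGY : ∀ x y, HasGradientAt (f x) (GY x y) y)
    (hGY₀ : ∀ x, GY x (ystar x) = 0) (hA : HasFDerivAt (fun x => GY x (ystar x₀)) A x₀) :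
    (fun x => ystar x - ystar x₀) =O[𝓝 x₀] (fun x => x - x₀) := by
  refine (isBigO_of_le' (c := μ⁻¹) _ fun x => ?_).trans (by simpa [hGY₀] using hA.isBigO_sub)
  rw [← div_eq_inv_mul, le_div_iff₀' hμ, norm_sub_rev]
  exact (hconc x).mul_norm_sub_le_norm_gradient (hGY₀ x ▸ hGY x (ystar x)) (hGY x _)

section PartialDerivatives

variable {Y Z : Type*} [NormedAddCommGroup Y] [NormedSpace ℝ Y] [NormedAddCommGroup Z]
  [NormedSpace ℝ Z]

theorem isLittleO_sub_partialFDeriv_of_tendsto {X : Type*} [PseudoMetricSpace X]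
    {g : X → Y → Z} {B : X → Y → Y →L[ℝ] Z} {φ : X → Y} {x₀ : X} {y₀ : Y}
    (hB : ∀ x y, HasFDerivAt (g x) (B x y) y)
    (hBc : ContinuousAt (fun p : X × Y => B p.1 p.2) (x₀, y₀))
    (hφ : Tendsto φ (𝓝 x₀) (𝓝 y₀)) :
    (fun x => g x (φ x) - g x y₀ - B x₀ y₀ (φ x - y₀)) =o[𝓝 x₀] (fun x => φ x - y₀) := by
  refine isLittleO_iff.mpr fun c hc => ?_
  obtain ⟨δ, hδ, hBδ⟩ := Metric.continuousAt_iff.mp hBc c hc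
  filter_upwards [Metric.ball_mem_nhds x₀ hδ, hφ (Metric.ball_mem_nhds y₀ hδ)] with x hx hφx
  have hbound : ∀ y ∈ Metric.ball y₀ δ, ‖B x y - B x₀ y₀‖ ≤ c := fun y hy => by
    rw [← dist_eq_norm]
    exact (hBδ (x := (x, y)) (by rw [Prod.dist_eq]; exact max_lt hx hy)).le
  exact (convex_ball y₀ δ).norm_image_sub_le_of_norm_hasFDerivWithin_le'
    (fun y _ => (hB x y).hasFDerivWithinAt) hbound (Metric.mem_ball_self hδ) hφx

variable {X : Type*} [NormedAddCommGroup X] [NormedSpace ℝ X]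
  {g : X → Y → Z} {B : X → Y → Y →L[ℝ] Z} {φ : X → Y} {x₀ : X} {A : X →L[ℝ] Z}

theorem isLittleO_sub_partialFDerivs (hA : HasFDerivAt (fun x => g x (φ x₀)) A x₀)
    (hB : ∀ x y, HasFDerivAt (g x) (B x y) y)
    (hBc : ContinuousAt (fun p : X × Y => B p.1 p.2) (x₀, φ x₀))
    (hφ : (fun x => φ x - φ x₀) =O[𝓝 x₀] (fun x => x - x₀)) :
    (fun x => g x (φ x) - g x₀ (φ x₀) - A (x - x₀) - B x₀ (φ x₀) (φ x - φ x₀)) =o[𝓝 x₀]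
      (fun x => x - x₀) := by
  have hφ' : Tendsto φ (𝓝 x₀) (𝓝 (φ x₀)) :=
    tendsto_sub_nhds_zero_iff.mp (hφ.trans_tendsto (tendsto_sub_nhds_zero_iff.mpr tendsto_id))
  refine (((isLittleO_sub_partialFDeriv_of_tendsto hB hBc hφ').trans_isBigO hφ).add
    hA.isLittleO).congr_left fun x => ?_
  abel

theorem hasFDerivAt_implicit_of_isBigO (h₀ : ∀ x, g x (φ x) = 0)
    (hA : HasFDerivAt (fun x => g x (φ x₀)) A x₀) (hB : ∀ x y, HasFDerivAt (g x) (B x y) y)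
    (hBc : ContinuousAt (fun p : X × Y => B p.1 p.2) (x₀, φ x₀))
    (hφ : (fun x => φ x - φ x₀) =O[𝓝 x₀] (fun x => x - x₀)) {L : Z →L[ℝ] Y}
    (hL : L.comp (B x₀ (φ x₀)) = ContinuousLinearMap.id ℝ Y) :
    HasFDerivAt φ (-(L.comp A)) x₀ := by
  refine .of_isLittleO (((L.isBigO_comp _ _).trans_isLittleO
    (isLittleO_sub_partialFDerivs hA hB hBc hφ)).neg_left.congr_left fun x => ?_)
  have hLB (v : Y) : L (B x₀ (φ x₀) v) = v := DFunLike.congr_fun hL v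
  simp only [h₀, map_sub, hLB, neg_apply, ContinuousLinearMap.comp_apply]
  abel

theorem hasFDerivAt_comp_of_partialFDerivs {D : X →L[ℝ] Y}
    (hA : HasFDerivAt (fun x => g x (φ x₀)) A x₀) (hB : ∀ x y, HasFDerivAt (g x) (B x y) y)
    (hBc : ContinuousAt (fun p : X × Y => B p.1 p.2) (x₀, φ x₀)) (hφ : HasFDerivAt φ D x₀) :
    HasFDerivAt (fun x => g x (φ x)) (A + (B x₀ (φ x₀)).comp D) x₀ := by
  refine .of_isLittleO (((isLittleO_sub_partialFDerivs hA hB hBc hφ.isBigO_sub).add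
    ((B x₀ (φ x₀)).isBigO_comp _ _ |>.trans_isLittleO hφ.isLittleO)).congr_left fun x => ?_)
  simp only [map_sub, add_apply, ContinuousLinearMap.comp_apply]
  abel

end PartialDerivatives

theorem stmt_3_general {d n : ℕ}
    (f : EuclideanSpace ℝ (Fin d) → EuclideanSpace ℝ (Fin n) → ℝ)
    (μ : ℝ) (hμ : 0 < μ)
    (hconc : ∀ x, StrongConcaveOn Set.univ μ (f x))
    (GX : EuclideanSpace ℝ (Fin d) → EuclideanSpace ℝ (Fin n) → EuclideanSpace ℝ (Fin d))
    (GY : EuclideanSpace ℝ (Fin d) → EuclideanSpace ℝ (Fin n) → EuclideanSpace ℝ (Fin n))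
    (hGX : ∀ x y, HasGradientAt (fun x' => f x' y) (GX x y) x)
    (hGY : ∀ x y, HasGradientAt (fun y' => f x y') (GY x y) y)
    (HXX : EuclideanSpace ℝ (Fin d) → EuclideanSpace ℝ (Fin n) →
      EuclideanSpace ℝ (Fin d) →L[ℝ] EuclideanSpace ℝ (Fin d))
    (HXY : EuclideanSpace ℝ (Fin d) → EuclideanSpace ℝ (Fin n) →
      EuclideanSpace ℝ (Fin n) →L[ℝ] EuclideanSpace ℝ (Fin d))
    (HYX : EuclideanSpace ℝ (Fin d) → EuclideanSpace ℝ (Fin n) →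
      EuclideanSpace ℝ (Fin d) →L[ℝ] EuclideanSpace ℝ (Fin n))
    (HYY : EuclideanSpace ℝ (Fin d) → EuclideanSpace ℝ (Fin n) →
      EuclideanSpace ℝ (Fin n) →L[ℝ] EuclideanSpace ℝ (Fin n))
    (hHXX : ∀ x y, HasFDerivAt (fun x' => GX x' y) (HXX x y) x)
    (hHXY : ∀ x y, HasFDerivAt (fun y' => GX x y') (HXY x y) y)
    (hHYX : ∀ x y, HasFDerivAt (fun x' => GY x' y) (HYX x y) x)
    (hHYY : ∀ x y, HasFDerivAt (fun y' => GY x y') (HYY x y) y)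
    -- twice *continuously* differentiable
    (hcontXY : Continuous fun p : EuclideanSpace ℝ (Fin d) × EuclideanSpace ℝ (Fin n) => HXY p.1 p.2)
    (hcontYY : Continuous fun p : EuclideanSpace ℝ (Fin d) × EuclideanSpace ℝ (Fin n) => HYY p.1 p.2)
    (ystar : EuclideanSpace ℝ (Fin d) → EuclideanSpace ℝ (Fin n))
    (hmax : ∀ x y, f x y ≤ f x (ystar x))
    (Φ : EuclideanSpace ℝ (Fin d) → ℝ) (hΦ : ∀ x, Φ x = f x (ystar x))
    (gradΦ : EuclideanSpace ℝ (Fin d) → EuclideanSpace ℝ (Fin d))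
    (hgradΦ : ∀ x, HasGradientAt Φ (gradΦ x) x)
    (HΦ : EuclideanSpace ℝ (Fin d) → EuclideanSpace ℝ (Fin d) →L[ℝ] EuclideanSpace ℝ (Fin d))
    (hHΦ : ∀ x, HasFDerivAt gradΦ (HΦ x) x)
    (xbar : EuclideanSpace ℝ (Fin d)) (ybar : EuclideanSpace ℝ (Fin n))
    (hybar : ybar = ystar xbar)
    -- inverse of the yy-block Hessian at (xbar, ybar)
    (HYYinv : EuclideanSpace ℝ (Fin n) →L[ℝ] EuclideanSpace ℝ (Fin n))
    (hHYYinv₂ : HYYinv.comp (HYY xbar ybar) = ContinuousLinearMap.id ℝ _) :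
    (GX xbar ybar = 0 ∧ GY xbar ybar = 0 ∧
        (∀ w : EuclideanSpace ℝ (Fin n), w ≠ 0 → ⟪w, HYY xbar ybar w⟫ < 0) ∧
        (∀ e : EuclideanSpace ℝ (Fin d), e ≠ 0 →
          0 < ⟪e, HXX xbar ybar e - HXY xbar ybar (HYYinv (HYX xbar ybar e))⟫))
      ↔ (gradΦ xbar = 0 ∧
          ∀ e : EuclideanSpace ℝ (Fin d), e ≠ 0 → 0 < ⟪e, HΦ xbar e⟫) := by
  subst hybar
  have hGY₀ (x) : GY x (ystar x) = 0 :=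
    IsLocalMax.hasGradientAt_eq_zero (.of_forall (hmax x)) (hGY x _)
  have hgrad : gradΦ = fun x => GX x (ystar x) := funext fun x =>
    (hgradΦ x).eq_of_eventuallyLE_of_eq (hGX x (ystar x))
      (.of_forall fun x' => (hΦ x').symm ▸ hmax x' (ystar x)) (hΦ x).symm
  have hystar := hasFDerivAt_implicit_of_isBigO hGY₀ (hHYX xbar _) hHYY hcontYY.continuousAt
    (isBigO_sub_of_strongConcaveOn hμ hconc hGY hGY₀ (hHYX xbar _)) hHYYinv₂
  have hHΦ_eq : HΦ xbar = HXX xbar (ystar xbar) + (HXY xbar (ystar xbar)).comp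
      (-(HYYinv.comp (HYX xbar (ystar xbar)))) := by
    refine (hHΦ xbar).unique ?_
    rw [hgrad]
    exact hasFDerivAt_comp_of_partialFDerivs (hHXX xbar _) hHXY hcontXY.continuousAt hystar
  have hschur (e) : HΦ xbar e =
      HXX xbar (ystar xbar) e - HXY xbar (ystar xbar) (HYYinv (HYX xbar (ystar xbar) e)) := by
    simp [hHΦ_eq, sub_eq_add_neg]
  have hHYY_neg (w) (hw : w ≠ 0) : ⟪w, HYY xbar (ystar xbar) w⟫ < 0 :=
    ((hconc xbar).inner_hessian_le (hGY xbar) (hHYY xbar _) w).trans_lt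
      (neg_neg_of_pos (by positivity))
  simp only [hgrad, hschur]
  exact ⟨fun ⟨hGX₀, _, _, hpos⟩ => ⟨hGX₀, hpos⟩,
    fun ⟨hGX₀, hpos⟩ => ⟨hGX₀, hGY₀ _, hHYY_neg, hpos⟩⟩

theorem stmt_3 {d n : ℕ}
    (f : EuclideanSpace ℝ (Fin d) → EuclideanSpace ℝ (Fin n) → ℝ)
    (μ : ℝ) (hμ : 0 < μ)
    (hconc : ∀ x, StrongConcaveOn Set.univ μ (f x))
    (GX : EuclideanSpace ℝ (Fin d) → EuclideanSpace ℝ (Fin n) → EuclideanSpace ℝ (Fin d))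
    (GY : EuclideanSpace ℝ (Fin d) → EuclideanSpace ℝ (Fin n) → EuclideanSpace ℝ (Fin n))
    (hGX : ∀ x y, HasGradientAt (fun x' => f x' y) (GX x y) x)
    (hGY : ∀ x y, HasGradientAt (fun y' => f x y') (GY x y) y)
    (HXX : EuclideanSpace ℝ (Fin d) → EuclideanSpace ℝ (Fin n) →
      EuclideanSpace ℝ (Fin d) →L[ℝ] EuclideanSpace ℝ (Fin d))
    (HXY : EuclideanSpace ℝ (Fin d) → EuclideanSpace ℝ (Fin n) →
      EuclideanSpace ℝ (Fin n) →L[ℝ] EuclideanSpace ℝ (Fin d))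
    (HYX : EuclideanSpace ℝ (Fin d) → EuclideanSpace ℝ (Fin n) →
      EuclideanSpace ℝ (Fin d) →L[ℝ] EuclideanSpace ℝ (Fin n))
    (HYY : EuclideanSpace ℝ (Fin d) → EuclideanSpace ℝ (Fin n) →
      EuclideanSpace ℝ (Fin n) →L[ℝ] EuclideanSpace ℝ (Fin n))
    (hHXX : ∀ x y, HasFDerivAt (fun x' => GX x' y) (HXX x y) x)
    (hHXY : ∀ x y, HasFDerivAt (fun y' => GX x y') (HXY x y) y)
    (hHYX : ∀ x y, HasFDerivAt (fun x' => GY x' y) (HYX x y) x)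
    (hHYY : ∀ x y, HasFDerivAt (fun y' => GY x y') (HYY x y) y)
    -- twice *continuously* differentiable
    (hcontXX : Continuous fun p : EuclideanSpace ℝ (Fin d) × EuclideanSpace ℝ (Fin n) => HXX p.1 p.2)
    (hcontXY : Continuous fun p : EuclideanSpace ℝ (Fin d) × EuclideanSpace ℝ (Fin n) => HXY p.1 p.2)
    (hcontYX : Continuous fun p : EuclideanSpace ℝ (Fin d) × EuclideanSpace ℝ (Fin n) => HYX p.1 p.2)
    (hcontYY : Continuous fun p : EuclideanSpace ℝ (Fin d) × EuclideanSpace ℝ (Fin n) => HYY p.1 p.2)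
    (ystar : EuclideanSpace ℝ (Fin d) → EuclideanSpace ℝ (Fin n))
    (hmax : ∀ x y, f x y ≤ f x (ystar x))
    (Φ : EuclideanSpace ℝ (Fin d) → ℝ) (hΦ : ∀ x, Φ x = f x (ystar x))
    (gradΦ : EuclideanSpace ℝ (Fin d) → EuclideanSpace ℝ (Fin d))
    (hgradΦ : ∀ x, HasGradientAt Φ (gradΦ x) x)
    (HΦ : EuclideanSpace ℝ (Fin d) → EuclideanSpace ℝ (Fin d) →L[ℝ] EuclideanSpace ℝ (Fin d))
    (hHΦ : ∀ x, HasFDerivAt gradΦ (HΦ x) x)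
    (xbar : EuclideanSpace ℝ (Fin d)) (ybar : EuclideanSpace ℝ (Fin n))
    (hybar : ybar = ystar xbar)
    -- inverse of the yy-block Hessian at (xbar, ybar)
    (HYYinv : EuclideanSpace ℝ (Fin n) →L[ℝ] EuclideanSpace ℝ (Fin n))
    (hHYYinv₁ : (HYY xbar ybar).comp HYYinv = ContinuousLinearMap.id ℝ _)
    (hHYYinv₂ : HYYinv.comp (HYY xbar ybar) = ContinuousLinearMap.id ℝ _) :
    (GX xbar ybar = 0 ∧ GY xbar ybar = 0 ∧
        (∀ w : EuclideanSpace ℝ (Fin n), w ≠ 0 → ⟪w, HYY xbar ybar w⟫ < 0) ∧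
        (∀ e : EuclideanSpace ℝ (Fin d), e ≠ 0 →
          0 < ⟪e, HXX xbar ybar e - HXY xbar ybar (HYYinv (HYX xbar ybar e))⟫))
      ↔ (gradΦ xbar = 0 ∧
          ∀ e : EuclideanSpace ℝ (Fin d), e ≠ 0 → 0 < ⟪e, HΦ xbar e⟫) :=
  stmt_3_general f μ hμ hconc GX GY hGX hGY HXX HXY HYX HYY hHXX hHXY hHYX hHYY hcontXY hcontYY
    ystar hmax Φ hΦ gradΦ hgradΦ HΦ hHΦ xbar ybar hybar HYYinv hHYYinv₂
end

section
/- Suppose g : ℝ^d × ℝ^n → ℝ is three times continuously differentiable and μ-strongly convex in y, with ‖∇²_{xy} g‖ ≤ ℓ and all third-order partial derivatives bounded by ρ in operator norm. Let y*(x) = argmin_y g(x,y). Then the second derivative of the implicit map satisfies ‖∂²y*(x)/∂x²‖ ≤ (ρ/μ)(1 + ℓ/μ)². -/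
/-!
Strong convexity in `y` makes the Hessian `∇²_y g` coercive: `⟪∇²_y g w, w⟫ ≥ μ ‖w‖²`, so
`μ ‖w‖ ≤ ‖∇²_y g w‖`. Differentiating `∇_y g (x, y*(x)) = 0` once gives
`∇²_y g ∘ J = -∇²_{xy} g`, hence `‖J‖ ≤ ℓ / μ` and `y*` is `ℓ / μ`-Lipschitz. Instead of
differentiating a second time, compare this identity at two points `x₁, x₂`: by the third-order
bounds, both `∇²_{xy} g` and `∇²_y g` along `(x, y*(x))` are `ρ (1 + ℓ / μ)`-Lipschitz, so `J` is
`(ρ / μ) (1 + ℓ / μ)²`-Lipschitz, which bounds its derivative `J'`.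
-/

open scoped RealInnerProductSpace
open Filter Set Topology

section StrongConvexity

variable {F : Type*} [NormedAddCommGroup F] [InnerProductSpace ℝ F] {f : F → ℝ} {μ : ℝ}

lemma hasDerivAt_const_add_smul (y w : F) (t : ℝ) :
    HasDerivAt (fun s : ℝ => y + s • w) w t := by
  simpa using ((hasDerivAt_id t).smul_const w).const_add y

lemma StrongConvexOn.convexOn_sub_sq_comp_line (hf : StrongConvexOn univ μ f) (y w : F) :
    ConvexOn ℝ univ fun t : ℝ => f (y + t • w) - μ / 2 * ‖w‖ ^ 2 * t ^ 2 := by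
  refine ⟨convex_univ, fun s _ t _ a b ha hb hab => ?_⟩
  have h := hf.2 (mem_univ (y + s • w)) (mem_univ (y + t • w)) ha hb hab
  obtain rfl : b = 1 - a := by linarith
  have hpt : a • (y + s • w) + (1 - a) • (y + t • w) = y + (a * s + (1 - a) * t) • w := by
    module
  have hdiff : (y + s • w) - (y + t • w) = (s - t) • w := by module
  rw [hpt, hdiff, norm_smul, Real.norm_eq_abs] at h
  simp only [smul_eq_mul, mul_pow, sq_abs] at h ⊢
  linear_combination h

variable [CompleteSpace F]

lemma HasGradientAt.hasDerivAt_comp_const_add_smul {G y w : F} {t : ℝ}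
    (hf : HasGradientAt f G (y + t • w)) :
    HasDerivAt (fun s : ℝ => f (y + s • w)) ⟪G, w⟫ t := by
  simpa [Function.comp_def] using
    hf.hasFDerivAt.comp_hasDerivAt t (hasDerivAt_const_add_smul y w t)

lemma IsLocalMin.hasGradientAt_eq_zero {a G : F} (h : IsLocalMin f a)
    (hf : HasGradientAt f G a) : G = 0 := by
  simpa using h.hasFDerivAt_eq_zero hf.hasFDerivAt

variable {G : F → F}

lemma StrongConvexOn.mul_sq_norm_sub_le_inner_sub (hf : StrongConvexOn univ μ f)
    (hG : ∀ z, HasGradientAt f (G z) z) (a b : F) :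
    μ * ‖a - b‖ ^ 2 ≤ ⟪G a - G b, a - b⟫ := by
  set w := a - b
  have hψ : ∀ t : ℝ, HasDerivAt (fun s : ℝ => f (b + s • w) - μ / 2 * ‖w‖ ^ 2 * s ^ 2)
      (⟪G (b + t • w), w⟫ - μ * ‖w‖ ^ 2 * t) t := fun t =>
    ((hG _).hasDerivAt_comp_const_add_smul.sub
      ((hasDerivAt_pow 2 t).const_mul (μ / 2 * ‖w‖ ^ 2))).congr_deriv (by ring)
  have hψc := hf.convexOn_sub_sq_comp_line b w
  have h := (hψc.le_slope_of_hasDerivAt (mem_univ 0) (mem_univ 1) one_pos (hψ 0)).trans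
    (hψc.slope_le_of_hasDerivAt (mem_univ 0) (mem_univ 1) one_pos (hψ 1))
  simp only [zero_smul, add_zero, one_smul, mul_zero, sub_zero, mul_one, w,
    add_sub_cancel] at h
  rw [inner_sub_left]
  linarith

lemma StrongConvexOn.mul_sq_norm_le_inner_apply (hf : StrongConvexOn univ μ f)
    (hG : ∀ z, HasGradientAt f (G z) z) {y : F} {H : F →L[ℝ] F} (hH : HasFDerivAt G H y)
    (w : F) : μ * ‖w‖ ^ 2 ≤ ⟪H w, w⟫ := by
  have hline : HasDerivAt (fun t : ℝ => G (y + t • w)) (H w) 0 :=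
    hH.comp_hasDerivAt_of_eq 0 (hasDerivAt_const_add_smul y w 0) (by simp)
  have hinner : Continuous fun v : F => ⟪v, w⟫ := continuous_id.inner continuous_const
  refine ge_of_tendsto ((hinner.tendsto (H w)).comp hline.tendsto_slope_zero_right) ?_
  filter_upwards [self_mem_nhdsWithin] with t (ht : 0 < t)
  have h := hf.mul_sq_norm_sub_le_inner_sub hG (y + t • w) y
  simp only [add_sub_cancel_left, norm_smul, Real.norm_eq_abs, abs_of_pos ht,
    inner_smul_right] at h
  simp only [Function.comp_apply, zero_add, zero_smul, add_zero, real_inner_smul_left]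
  rw [inv_mul_eq_div, le_div_iff₀ ht]
  nlinarith

lemma StrongConvexOn.mul_norm_le_norm_apply (hf : StrongConvexOn univ μ f)
    (hG : ∀ z, HasGradientAt f (G z) z) {y : F} {H : F →L[ℝ] F} (hH : HasFDerivAt G H y)
    (w : F) : μ * ‖w‖ ≤ ‖H w‖ := by
  rcases eq_or_ne w 0 with rfl | hw
  · simp
  have hw : 0 < ‖w‖ := norm_pos_iff.mpr hw
  refine le_of_mul_le_mul_right ?_ hw
  calc μ * ‖w‖ * ‖w‖ = μ * ‖w‖ ^ 2 := by ring
    _ ≤ ⟪H w, w⟫ := hf.mul_sq_norm_le_inner_apply hG hH w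
    _ ≤ ‖H w‖ * ‖w‖ := real_inner_le_norm _ _

end StrongConvexity

section PartialDerivatives

variable {E Y Z : Type*} [NormedAddCommGroup E] [NormedSpace ℝ E] [NormedAddCommGroup Y]
  [NormedSpace ℝ Y] [NormedAddCommGroup Z] [NormedSpace ℝ Z]

lemma norm_sub_le_of_forall_hasFDerivAt_norm_le {f : E → Z} {f' : E → E →L[ℝ] Z} {C : ℝ}
    (hf : ∀ x, HasFDerivAt f (f' x) x) (hC : ∀ x, ‖f' x‖ ≤ C) (x₁ x₂ : E) :
    ‖f x₁ - f x₂‖ ≤ C * ‖x₁ - x₂‖ :=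
  convex_univ.norm_image_sub_le_of_norm_hasFDerivWithin_le
    (fun x _ => (hf x).hasFDerivWithinAt) (fun x _ => hC x) (mem_univ x₂) (mem_univ x₁)

variable {A : E → Y → Z} {Ax : E → Y → E →L[ℝ] Z} {Ay : E → Y → Y →L[ℝ] Z} {Cx Cy : ℝ}

lemma norm_sub_le_of_partial_fderiv_bounds (hAx : ∀ x y, HasFDerivAt (A · y) (Ax x y) x)
    (hAy : ∀ x y, HasFDerivAt (A x ·) (Ay x y) y) (hCx : ∀ x y, ‖Ax x y‖ ≤ Cx)
    (hCy : ∀ x y, ‖Ay x y‖ ≤ Cy) (x₁ x₂ : E) (y₁ y₂ : Y) :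
    ‖A x₁ y₁ - A x₂ y₂‖ ≤ Cx * ‖x₁ - x₂‖ + Cy * ‖y₁ - y₂‖ :=
  calc ‖A x₁ y₁ - A x₂ y₂‖ ≤ ‖A x₁ y₁ - A x₂ y₁‖ + ‖A x₂ y₁ - A x₂ y₂‖ :=
        norm_sub_le_norm_sub_add_norm_sub _ _ _
    _ ≤ Cx * ‖x₁ - x₂‖ + Cy * ‖y₁ - y₂‖ := add_le_add
      (norm_sub_le_of_forall_hasFDerivAt_norm_le (hAx · y₁) (hCx · y₁) x₁ x₂)
      (norm_sub_le_of_forall_hasFDerivAt_norm_le (hAy x₂) (hCy x₂) y₁ y₂)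

lemma continuous_uncurry_of_partial_fderiv_bounds
    (hAx : ∀ x y, HasFDerivAt (A · y) (Ax x y) x) (hAy : ∀ x y, HasFDerivAt (A x ·) (Ay x y) y)
    (hCx : ∀ x y, ‖Ax x y‖ ≤ Cx) (hCy : ∀ x y, ‖Ay x y‖ ≤ Cy) : Continuous ↿A := by
  refine continuous_iff_continuousAt.2 fun p => tendsto_iff_norm_sub_tendsto_zero.2 ?_
  refine squeeze_zero (fun _ => norm_nonneg _)
    (fun q => norm_sub_le_of_partial_fderiv_bounds hAx hAy hCx hCy q.1 p.1 q.2 p.2) ?_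
  simpa using (((continuous_fst.tendsto p).sub_const p.1).norm.const_mul Cx).add
    (((continuous_snd.tendsto p).sub_const p.2).norm.const_mul Cy)

lemma norm_sub_le_comp_of_partial_fderiv_bounds
    (hAx : ∀ x y, HasFDerivAt (A · y) (Ax x y) x) (hAy : ∀ x y, HasFDerivAt (A x ·) (Ay x y) y)
    (hCx : ∀ x y, ‖Ax x y‖ ≤ Cx) (hCy : ∀ x y, ‖Ay x y‖ ≤ Cy) {φ : E → Y} {K : ℝ}
    (hφ : ∀ x₁ x₂, ‖φ x₁ - φ x₂‖ ≤ K * ‖x₁ - x₂‖) (x₁ x₂ : E) :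
    ‖A x₁ (φ x₁) - A x₂ (φ x₂)‖ ≤ (Cx + Cy * K) * ‖x₁ - x₂‖ := by
  have hCy₀ : 0 ≤ Cy := (norm_nonneg _).trans (hCy x₁ (φ x₁))
  calc ‖A x₁ (φ x₁) - A x₂ (φ x₂)‖ ≤ Cx * ‖x₁ - x₂‖ + Cy * ‖φ x₁ - φ x₂‖ :=
        norm_sub_le_of_partial_fderiv_bounds hAx hAy hCx hCy _ _ _ _
    _ ≤ Cx * ‖x₁ - x₂‖ + Cy * (K * ‖x₁ - x₂‖) := by gcongr; exact hφ x₁ x₂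
    _ = (Cx + Cy * K) * ‖x₁ - x₂‖ := by ring

lemma partial_fderiv_comp_eq_neg_of_forall_eq_zero
    (hAx : ∀ x y, HasFDerivAt (A · y) (Ax x y) x) (hAy : ∀ x y, HasFDerivAt (A x ·) (Ay x y) y)
    {φ : E → Y} {φ' : E →L[ℝ] Y} {x₀ : E} (hcx : ContinuousAt ↿Ax (x₀, φ x₀))
    (hcy : ContinuousAt ↿Ay (x₀, φ x₀)) (hφ : HasFDerivAt φ φ' x₀)
    (hzero : ∀ x, A x (φ x) = 0) :
    (Ay x₀ (φ x₀)).comp φ' = -Ax x₀ (φ x₀) := by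
  have hA : HasStrictFDerivAt ↿A ((Ax x₀ (φ x₀)).coprod (Ay x₀ (φ x₀))) (x₀, φ x₀) :=
    hasStrictFDerivAt_uncurry_coprod (Eventually.of_forall fun p => hAx p.1 p.2)
      (Eventually.of_forall fun p => hAy p.1 p.2) hcx hcy
  have hcomp := hA.hasFDerivAt.comp x₀ ((hasFDerivAt_id x₀).prodMk hφ)
  have hconst : HasFDerivAt (↿A ∘ fun x => (x, φ x)) (0 : E →L[ℝ] Z) x₀ := by
    convert hasFDerivAt_const (𝕜 := ℝ) (0 : Z) x₀ using 2 with x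
    exact hzero x
  ext v
  simpa [eq_neg_iff_add_eq_zero, add_comm] using congrArg (· v) (hcomp.unique hconst)

end PartialDerivatives

section Coercive

variable {E Y Z : Type*} [NormedAddCommGroup E] [NormedSpace ℝ E] [NormedAddCommGroup Y]
  [NormedSpace ℝ Y] [NormedAddCommGroup Z] [NormedSpace ℝ Z] {μ : ℝ}

namespace ContinuousLinearMap

lemma mul_opNorm_le_opNorm_comp {H : Y →L[ℝ] Z} (hH : ∀ w, μ * ‖w‖ ≤ ‖H w‖) (A : E →L[ℝ] Y) :
    μ * ‖A‖ ≤ ‖H.comp A‖ := by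
  rcases le_or_gt μ 0 with hμ | hμ
  · exact (mul_nonpos_of_nonpos_of_nonneg hμ (norm_nonneg A)).trans (norm_nonneg _)
  rw [← le_div_iff₀' hμ]
  refine opNorm_le_bound _ (by positivity) fun v => ?_
  rw [div_mul_eq_mul_div, le_div_iff₀' hμ]
  exact (hH (A v)).trans ((H.comp A).le_opNorm v)

lemma norm_le_div_of_comp_eq_neg (hμ : 0 < μ) {H : Y →L[ℝ] Z} (hH : ∀ w, μ * ‖w‖ ≤ ‖H w‖)
    {J : E →L[ℝ] Y} {X : E →L[ℝ] Z} (hJ : H.comp J = -X) : ‖J‖ ≤ ‖X‖ / μ := by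
  rw [le_div_iff₀' hμ, ← norm_neg X, ← hJ]
  exact mul_opNorm_le_opNorm_comp hH J

lemma mul_norm_sub_le_of_comp_eq_neg {H₁ H₂ : Y →L[ℝ] Z} {X₁ X₂ : E →L[ℝ] Z}
    {J₁ J₂ : E →L[ℝ] Y} (hH₁ : ∀ w, μ * ‖w‖ ≤ ‖H₁ w‖) (h₁ : H₁.comp J₁ = -X₁)
    (h₂ : H₂.comp J₂ = -X₂) :
    μ * ‖J₁ - J₂‖ ≤ ‖H₁ - H₂‖ * ‖J₂‖ + ‖X₁ - X₂‖ := by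
  have hdiff : H₁.comp (J₁ - J₂) = -((H₁ - H₂).comp J₂ + (X₁ - X₂)) := by
    rw [comp_sub, h₁, sub_comp, h₂]
    abel
  calc μ * ‖J₁ - J₂‖ ≤ ‖H₁.comp (J₁ - J₂)‖ := mul_opNorm_le_opNorm_comp hH₁ _
    _ ≤ ‖(H₁ - H₂).comp J₂‖ + ‖X₁ - X₂‖ := by rw [hdiff, norm_neg]; exact norm_add_le _ _
    _ ≤ ‖H₁ - H₂‖ * ‖J₂‖ + ‖X₁ - X₂‖ := by gcongr; exact opNorm_comp_le _ _

end ContinuousLinearMap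

lemma norm_sub_le_of_comp_eq_neg {T : Type*} [NormedAddCommGroup T] {H : T → Y →L[ℝ] Z}
    {X : T → E →L[ℝ] Z} {J : T → E →L[ℝ] Y} {ℓ L : ℝ} (hμ : 0 < μ)
    (hH : ∀ x w, μ * ‖w‖ ≤ ‖H x w‖) (hJ : ∀ x, (H x).comp (J x) = -X x) (hX : ∀ x, ‖X x‖ ≤ ℓ)
    (hHL : ∀ x₁ x₂, ‖H x₁ - H x₂‖ ≤ L * ‖x₁ - x₂‖)
    (hXL : ∀ x₁ x₂, ‖X x₁ - X x₂‖ ≤ L * ‖x₁ - x₂‖) (x₁ x₂ : T) :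
    ‖J x₁ - J x₂‖ ≤ L / μ * (1 + ℓ / μ) * ‖x₁ - x₂‖ := by
  have hJ₂ : ‖J x₂‖ ≤ ℓ / μ :=
    (ContinuousLinearMap.norm_le_div_of_comp_eq_neg hμ (hH x₂) (hJ x₂)).trans
      (div_le_div_of_nonneg_right (hX x₂) hμ.le)
  rw [show L / μ * (1 + ℓ / μ) * ‖x₁ - x₂‖ = (1 + ℓ / μ) * (L * ‖x₁ - x₂‖) / μ by ring,
    le_div_iff₀' hμ]
  calc μ * ‖J x₁ - J x₂‖ ≤ ‖H x₁ - H x₂‖ * ‖J x₂‖ + ‖X x₁ - X x₂‖ :=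
        ContinuousLinearMap.mul_norm_sub_le_of_comp_eq_neg (hH x₁) (hJ x₁) (hJ x₂)
    _ ≤ L * ‖x₁ - x₂‖ * (ℓ / μ) + L * ‖x₁ - x₂‖ :=
        add_le_add (mul_le_mul (hHL x₁ x₂) hJ₂ (norm_nonneg _)
          ((norm_nonneg _).trans (hHL x₁ x₂))) (hXL x₁ x₂)
    _ = (1 + ℓ / μ) * (L * ‖x₁ - x₂‖) := by ring

end Coercive

/-- Bound on the second derivative of the implicit solution map `y*(x)`. -/
theorem stmt_15 {d n : ℕ}
    (g : EuclideanSpace ℝ (Fin d) → EuclideanSpace ℝ (Fin n) → ℝ)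
    (μ ℓ ρ : ℝ) (hμ : 0 < μ)
    (hsc : ∀ x, StrongConvexOn Set.univ μ (g x))
    (GY : EuclideanSpace ℝ (Fin d) → EuclideanSpace ℝ (Fin n) → EuclideanSpace ℝ (Fin n))
    (hGY : ∀ x y, HasGradientAt (g x) (GY x y) y)
    -- second derivatives of g in y
    (HYY : EuclideanSpace ℝ (Fin d) → EuclideanSpace ℝ (Fin n) →
      EuclideanSpace ℝ (Fin n) →L[ℝ] EuclideanSpace ℝ (Fin n))
    (hHYY : ∀ x y, HasFDerivAt (fun y' => GY x y') (HYY x y) y)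
    (HXY : EuclideanSpace ℝ (Fin d) → EuclideanSpace ℝ (Fin n) →
      EuclideanSpace ℝ (Fin d) →L[ℝ] EuclideanSpace ℝ (Fin n))
    (hHXY : ∀ x y, HasFDerivAt (fun x' => GY x' y) (HXY x y) x)
    (hHXYbound : ∀ x y, ‖HXY x y‖ ≤ ℓ)
    -- third derivatives of g, all bounded by ρ in operator norm
    (DxHXY : EuclideanSpace ℝ (Fin d) → EuclideanSpace ℝ (Fin n) →
      EuclideanSpace ℝ (Fin d) →L[ℝ] EuclideanSpace ℝ (Fin d) →L[ℝ] EuclideanSpace ℝ (Fin n))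
    (hDxHXY : ∀ x y, HasFDerivAt (fun x' => HXY x' y) (DxHXY x y) x)
    (DyHXY : EuclideanSpace ℝ (Fin d) → EuclideanSpace ℝ (Fin n) →
      EuclideanSpace ℝ (Fin n) →L[ℝ] EuclideanSpace ℝ (Fin d) →L[ℝ] EuclideanSpace ℝ (Fin n))
    (hDyHXY : ∀ x y, HasFDerivAt (fun y' => HXY x y') (DyHXY x y) y)
    (DxHYY : EuclideanSpace ℝ (Fin d) → EuclideanSpace ℝ (Fin n) →
      EuclideanSpace ℝ (Fin d) →L[ℝ] EuclideanSpace ℝ (Fin n) →L[ℝ] EuclideanSpace ℝ (Fin n))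
    (hDxHYY : ∀ x y, HasFDerivAt (fun x' => HYY x' y) (DxHYY x y) x)
    (DyHYY : EuclideanSpace ℝ (Fin d) → EuclideanSpace ℝ (Fin n) →
      EuclideanSpace ℝ (Fin n) →L[ℝ] EuclideanSpace ℝ (Fin n) →L[ℝ] EuclideanSpace ℝ (Fin n))
    (hDyHYY : ∀ x y, HasFDerivAt (fun y' => HYY x y') (DyHYY x y) y)
    (hDxHXYbound : ∀ x y, ‖DxHXY x y‖ ≤ ρ)
    (hDyHXYbound : ∀ x y, ‖DyHXY x y‖ ≤ ρ)
    (hDxHYYbound : ∀ x y, ‖DxHYY x y‖ ≤ ρ)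
    (hDyHYYbound : ∀ x y, ‖DyHYY x y‖ ≤ ρ)
    -- the solution map and its first and second derivatives
    (ystar : EuclideanSpace ℝ (Fin d) → EuclideanSpace ℝ (Fin n))
    (hmin : ∀ x y, g x (ystar x) ≤ g x y)
    (J : EuclideanSpace ℝ (Fin d) →
      EuclideanSpace ℝ (Fin d) →L[ℝ] EuclideanSpace ℝ (Fin n))
    (hJ : ∀ x, HasFDerivAt ystar (J x) x)
    (J' : EuclideanSpace ℝ (Fin d) →
      EuclideanSpace ℝ (Fin d) →L[ℝ] EuclideanSpace ℝ (Fin d) →L[ℝ] EuclideanSpace ℝ (Fin n))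
    (hJ' : ∀ x, HasFDerivAt J (J' x) x) :
    ∀ x, ‖J' x‖ ≤ ρ / μ * (1 + ℓ / μ) ^ 2 := by
  intro x₀
  have hρ : 0 ≤ ρ := (norm_nonneg (DxHXY x₀ (ystar x₀))).trans (hDxHXYbound x₀ (ystar x₀))
  have hcoer : ∀ x y w, μ * ‖w‖ ≤ ‖HYY x y w‖ := fun x y =>
    (hsc x).mul_norm_le_norm_apply (hGY x) (hHYY x y)
  have hgrad : ∀ x, GY x (ystar x) = 0 := fun x =>
    ((isMinOn_univ_iff.2 (hmin x)).isLocalMin univ_mem).hasGradientAt_eq_zero (hGY x _)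
  have hJeq : ∀ x, (HYY x (ystar x)).comp (J x) = -HXY x (ystar x) := fun x =>
    partial_fderiv_comp_eq_neg_of_forall_eq_zero hHXY hHYY
      (continuous_uncurry_of_partial_fderiv_bounds hDxHXY hDyHXY hDxHXYbound
        hDyHXYbound).continuousAt
      (continuous_uncurry_of_partial_fderiv_bounds hDxHYY hDyHYY hDxHYYbound
        hDyHYYbound).continuousAt
      (hJ x) hgrad
  have hJbound : ∀ x, ‖J x‖ ≤ ℓ / μ := fun x =>
    (ContinuousLinearMap.norm_le_div_of_comp_eq_neg hμ (hcoer x _) (hJeq x)).trans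
      (div_le_div_of_nonneg_right (hHXYbound x _) hμ.le)
  have hystar := norm_sub_le_of_forall_hasFDerivAt_norm_le hJ hJbound
  have hJlip := norm_sub_le_of_comp_eq_neg hμ (fun x => hcoer x (ystar x)) hJeq
    (fun x => hHXYbound x _)
    (norm_sub_le_comp_of_partial_fderiv_bounds hDxHYY hDyHYY hDxHYYbound hDyHYYbound hystar)
    (norm_sub_le_comp_of_partial_fderiv_bounds hDxHXY hDyHXY hDxHXYbound hDyHXYbound hystar)
  have hC : (ρ + ρ * (ℓ / μ)) / μ * (1 + ℓ / μ) = ρ / μ * (1 + ℓ / μ) ^ 2 := by ring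
  rw [← hC]
  exact (hJ' x₀).le_of_lip' (by rw [hC]; positivity) (Eventually.of_forall (hJlip · x₀))
end

section
/- Let g(x,·) be μ-strongly convex with ℓ-Lipschitz gradient in y, and consider gradient descent y^{t} = y^{t-1} − (1/ℓ)∇_y g(x, y^{t-1}) on the inner problem. Suppose additionally that y*(x) is κ-Lipschitz in x (κ = ℓ/μ). If the warm-start rule y_k⁰ = y_{k-1}^D is used across outer iterations with outer updates ‖x_k − x_{k-1}‖ ≤ ηG (gradient norms bounded by G), and D is chosen so that (1 − 1/κ)^{D/2} ≤ 1/2, then for all k: ‖y_k⁰ − y*(x_k)‖ ≤ (1/2)^k ‖y₀⁰ − y*(x₀)‖ + 2ηκG. -/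
/-!
A gradient step with step size `1/ℓ` contracts the distance to the minimiser `y*` by
`√(1 - μ/ℓ)`: the descent lemma at the new iterate bounds `g(y*) ≤ g(y) - ‖∇g y‖²/(2ℓ)`,
strong convexity bounds `g(y*) ≥ g(y) + ⟪∇g y, y* - y⟫ + μ/2 ‖y - y*‖²`, and together they give
`⟪∇g y, y - y*⟫ ≥ ‖∇g y‖²/(2ℓ) + μ/2 ‖y - y*‖²`, which is exactly what expanding
`‖y - ∇g y/ℓ - y*‖²` needs. After `D` steps the error has at least halved, the warm start costs
at most the drift `‖y*(x_{k+1}) - y*(x_k)‖ ≤ κηG`, and `a_{k+1} ≤ a_k/2 + κηG` unrolls to the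
bound.
-/

open RealInnerProductSpace AffineMap Set

variable {E : Type*} [NormedAddCommGroup E]

theorem ConvexOn.apply_add_le_of_hasFDerivAt [NormedSpace ℝ E] {s : Set E} {f : E → ℝ}
    {f' : E →L[ℝ] ℝ} {y z : E} (hf : ConvexOn ℝ s f) (hy : y ∈ s) (hz : z ∈ s)
    (hf' : HasFDerivAt f f' y) : f y + f' (z - y) ≤ f z := by
  let γ : ℝ →ᵃ[ℝ] E := lineMap y z
  have hγ : HasDerivAt (f ∘ γ) (f' (z - y)) 0 := by
    rw [← lineMap_apply_zero y z (k := ℝ)] at hf'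
    exact hf'.comp_hasDerivAt _ hasDerivAt_lineMap
  have := (hf.comp_affineMap γ).le_slope_of_hasDerivAt (by simpa [γ]) (by simpa [γ]) one_pos hγ
  simp only [slope, γ, Function.comp_apply, lineMap_apply_one, lineMap_apply_zero, sub_zero,
    inv_one, vsub_eq_sub, one_smul] at this
  linarith

variable [InnerProductSpace ℝ E] [CompleteSpace E]

theorem StrongConvexOn.apply_add_inner_add_le_of_hasGradientAt {s : Set E} {f : E → ℝ} {m : ℝ}
    {f' y z : E} (hf : StrongConvexOn s m f) (hy : y ∈ s) (hz : z ∈ s)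
    (hf' : HasGradientAt f f' y) :
    f y + ⟪f', z - y⟫ + m / 2 * ‖z - y‖ ^ 2 ≤ f z := by
  have hderiv := hf'.hasFDerivAt.sub ((hasStrictFDerivAt_norm_sq y).hasFDerivAt.const_mul (m / 2))
  have hconv := (strongConvexOn_iff_convex.mp hf).apply_add_le_of_hasFDerivAt hy hz hderiv
  simp only [sub_apply, InnerProductSpace.toDual_apply_apply, smul_apply, coe_innerSL_apply,
    nsmul_eq_mul, Nat.cast_ofNat, smul_eq_mul] at hconv
  have hsq : ‖z - y‖ ^ 2 = ‖z‖ ^ 2 - ‖y‖ ^ 2 - 2 * ⟪y, z - y⟫ := by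
    rw [norm_sub_sq_real, inner_sub_right, real_inner_self_eq_norm_sq, real_inner_comm]; ring
  rw [hsq]
  linarith

theorem apply_le_add_inner_add_of_lipschitz_gradient {f : E → ℝ} {f' : E → E} {L : ℝ}
    (hf : ∀ w, HasGradientAt f (f' w) w) (hL : ∀ w w', ‖f' w - f' w'‖ ≤ L * ‖w - w'‖) (y z : E) :
    f z ≤ f y + ⟪f' y, z - y⟫ + L / 2 * ‖z - y‖ ^ 2 := by
  let γ : ℝ →ᵃ[ℝ] E := lineMap y z
  have hγ : ∀ t, HasDerivAt (f ∘ γ) ⟪f' (γ t), z - y⟫ t := fun t =>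
    (hf (γ t)).hasFDerivAt.comp_hasDerivAt t hasDerivAt_lineMap
  have hB : ∀ t, HasDerivAt (fun t : ℝ => f y + t * ⟪f' y, z - y⟫ + L / 2 * t ^ 2 * ‖z - y‖ ^ 2)
      (⟪f' y, z - y⟫ + L * t * ‖z - y‖ ^ 2) t := by
    intro t
    refine ((((hasDerivAt_id t).mul_const _).const_add (f y)).add
      (((hasDerivAt_pow 2 t).const_mul (L / 2)).mul_const _)).congr_deriv ?_
    simp only [one_mul, Nat.cast_ofNat]
    ring
  have hbound : ∀ t ∈ Ico (0 : ℝ) 1,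
      ⟪f' (γ t), z - y⟫ ≤ ⟪f' y, z - y⟫ + L * t * ‖z - y‖ ^ 2 := by
    rintro t ⟨ht, -⟩
    have hdist : ‖γ t - y‖ = t * ‖z - y‖ := by
      rw [← vsub_eq_sub, lineMap_vsub_left, norm_smul, Real.norm_of_nonneg ht, vsub_eq_sub]
    calc ⟪f' (γ t), z - y⟫ = ⟪f' y, z - y⟫ + ⟪f' (γ t) - f' y, z - y⟫ := by
          rw [inner_sub_left]; ring
      _ ≤ ⟪f' y, z - y⟫ + ‖f' (γ t) - f' y‖ * ‖z - y‖ := by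
          gcongr; exact real_inner_le_norm _ _
      _ ≤ ⟪f' y, z - y⟫ + L * ‖γ t - y‖ * ‖z - y‖ := by
          gcongr; exact hL _ _
      _ = ⟪f' y, z - y⟫ + L * t * ‖z - y‖ ^ 2 := by rw [hdist]; ring
  have := image_le_of_deriv_right_le_deriv_boundary
    (fun t _ => (hγ t).continuousAt.continuousWithinAt) (fun t _ => (hγ t).hasDerivWithinAt)
    (by simp [γ]) (fun t _ => (hB t).continuousAt.continuousWithinAt)
    (fun t _ => (hB t).hasDerivWithinAt) hbound (right_mem_Icc.mpr zero_le_one)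
  simpa [γ] using this

variable {f : E → ℝ} {f' : E → E} {m L : ℝ} {p : E}

theorem norm_sub_smul_gradient_sub_sq_le (hsc : StrongConvexOn univ m f)
    (hf : ∀ w, HasGradientAt f (f' w) w) (hL : ∀ w w', ‖f' w - f' w'‖ ≤ L * ‖w - w'‖)
    (hL0 : 0 < L) (hmin : ∀ w, f p ≤ f w) (y : E) :
    ‖y - (1 / L) • f' y - p‖ ^ 2 ≤ (1 - m / L) * ‖y - p‖ ^ 2 := by
  set v := f' y
  have hdesc : f p ≤ f y - 1 / (2 * L) * ‖v‖ ^ 2 := by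
    calc f p ≤ f (y - (1 / L) • v) := hmin _
      _ ≤ f y + ⟪v, y - (1 / L) • v - y⟫ + L / 2 * ‖y - (1 / L) • v - y‖ ^ 2 :=
        apply_le_add_inner_add_of_lipschitz_gradient hf hL _ _
      _ = f y - 1 / (2 * L) * ‖v‖ ^ 2 := by
        rw [sub_sub_cancel_left, inner_neg_right, real_inner_smul_right,
          real_inner_self_eq_norm_sq, norm_neg, norm_smul, Real.norm_of_nonneg (by positivity)]
        field_simp
        ring
  have hlow := hsc.apply_add_inner_add_le_of_hasGradientAt (mem_univ y) (mem_univ p) (hf y)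
  have hinner : 1 / (2 * L) * ‖v‖ ^ 2 + m / 2 * ‖y - p‖ ^ 2 ≤ ⟪v, y - p⟫ := by
    rw [← neg_sub y p, inner_neg_right, norm_neg] at hlow
    linarith
  calc ‖y - (1 / L) • v - p‖ ^ 2
      = ‖y - p‖ ^ 2 - 2 / L * ⟪v, y - p⟫ + 1 / L ^ 2 * ‖v‖ ^ 2 := by
        rw [sub_right_comm, norm_sub_sq_real, real_inner_smul_right, norm_smul,
          Real.norm_of_nonneg (by positivity), real_inner_comm]
        ring
    _ ≤ ‖y - p‖ ^ 2 - 2 / L * (1 / (2 * L) * ‖v‖ ^ 2 + m / 2 * ‖y - p‖ ^ 2)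
          + 1 / L ^ 2 * ‖v‖ ^ 2 := by gcongr
    _ = (1 - m / L) * ‖y - p‖ ^ 2 := by field_simp; ring

theorem norm_sub_smul_gradient_sub_le (hsc : StrongConvexOn univ m f)
    (hf : ∀ w, HasGradientAt f (f' w) w) (hL : ∀ w w', ‖f' w - f' w'‖ ≤ L * ‖w - w'‖)
    (hL0 : 0 < L) (hmin : ∀ w, f p ≤ f w) (y : E) :
    ‖y - (1 / L) • f' y - p‖ ≤ √(1 - m / L) * ‖y - p‖ := by
  rw [← Real.sqrt_sq (norm_nonneg (y - p)), ← Real.sqrt_mul' _ (by positivity),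
    ← Real.sqrt_sq (norm_nonneg (y - (1 / L) • f' y - p))]
  exact Real.sqrt_le_sqrt (norm_sub_smul_gradient_sub_sq_le hsc hf hL hL0 hmin y)

theorem le_pow_mul_add_div_of_le_mul_add {a : ℕ → ℝ} {q b : ℝ} (hq0 : 0 ≤ q) (hq1 : q < 1)
    (hb : 0 ≤ b) (h : ∀ k, a (k + 1) ≤ q * a k + b) (k : ℕ) :
    a k ≤ q ^ k * a 0 + b / (1 - q) := by
  have h1q : 0 < 1 - q := sub_pos.mpr hq1
  induction k with
  | zero => simpa using div_nonneg hb h1q.le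
  | succ k ih =>
    calc a (k + 1) ≤ q * (q ^ k * a 0 + b / (1 - q)) + b := (h k).trans (by gcongr)
      _ = q ^ (k + 1) * a 0 + b / (1 - q) := by field_simp; ring

theorem stmt_16_general {d n : ℕ}
    (g : EuclideanSpace ℝ (Fin d) → EuclideanSpace ℝ (Fin n) → ℝ)
    (μ ℓ κ η G : ℝ) (hμ : 0 < μ) (hμℓ : μ ≤ ℓ) (hκ : κ = ℓ / μ)
    (hsc : ∀ x, StrongConvexOn Set.univ μ (g x))
    (GY : EuclideanSpace ℝ (Fin d) → EuclideanSpace ℝ (Fin n) → EuclideanSpace ℝ (Fin n))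
    (hGY : ∀ x y, HasGradientAt (g x) (GY x y) y)
    (hGYlip : ∀ x y y', ‖GY x y - GY x y'‖ ≤ ℓ * ‖y - y'‖)
    (ystar : EuclideanSpace ℝ (Fin d) → EuclideanSpace ℝ (Fin n))
    (hmin : ∀ x y, g x (ystar x) ≤ g x y)
    -- y*(x) is κ-Lipschitz in x
    (hystarlip : ∀ x x', ‖ystar x - ystar x'‖ ≤ κ * ‖x - x'‖)
    -- outer iterates with bounded updates
    (x : ℕ → EuclideanSpace ℝ (Fin d))
    (hx : ∀ k, ‖x (k + 1) - x k‖ ≤ η * G)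
    -- inner gradient descent with warm starts
    (D : ℕ) (hD : (1 - 1 / κ) ^ ((D : ℝ) / 2) ≤ 1 / 2)
    (Y : ℕ → ℕ → EuclideanSpace ℝ (Fin n))
    (hwarm : ∀ k, Y (k + 1) 0 = Y k D)
    (hinner : ∀ k t, Y k (t + 1) = Y k t - (1 / ℓ) • GY (x k) (Y k t)) :
    ∀ k, ‖Y k 0 - ystar (x k)‖ ≤ (1 / 2) ^ k * ‖Y 0 0 - ystar (x 0)‖ + 2 * η * κ * G := by
  have hℓ : 0 < ℓ := hμ.trans_le hμℓ
  have hκ0 : 0 ≤ κ := hκ ▸ by positivity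
  have hdrift : ∀ k, ‖ystar (x k) - ystar (x (k + 1))‖ ≤ κ * (η * G) := fun k =>
    (hystarlip _ _).trans (by rw [norm_sub_rev]; gcongr; exact hx k)
  have hhalf : √(1 - μ / ℓ) ^ D ≤ 1 / 2 := by
    have hgap : 0 ≤ 1 - μ / ℓ := sub_nonneg.mpr ((div_le_one hℓ).mpr hμℓ)
    rwa [hκ, one_div_div, Real.rpow_div_two_eq_sqrt _ hgap, Real.rpow_natCast] at hD
  have hloop : ∀ k, ‖Y k D - ystar (x k)‖ ≤ 1 / 2 * ‖Y k 0 - ystar (x k)‖ := fun k => by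
    refine (le_geom (u := fun t => ‖Y k t - ystar (x k)‖) (Real.sqrt_nonneg _) D
      fun t _ => ?_).trans (by gcongr)
    rw [hinner]
    exact norm_sub_smul_gradient_sub_le (hsc _) (hGY _) (hGYlip _) hℓ (hmin _) _
  have hrec : ∀ k, ‖Y (k + 1) 0 - ystar (x (k + 1))‖
      ≤ 1 / 2 * ‖Y k 0 - ystar (x k)‖ + κ * (η * G) := fun k => by
    rw [hwarm]
    exact (norm_sub_le_norm_sub_add_norm_sub _ (ystar (x k)) _).trans
      (add_le_add (hloop k) (hdrift k))
  intro k
  have hb : 0 ≤ κ * (η * G) := mul_nonneg hκ0 ((norm_nonneg _).trans (hx 0))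
  convert le_pow_mul_add_div_of_le_mul_add (a := fun k => ‖Y k 0 - ystar (x k)‖)
    (by norm_num) (by norm_num) hb hrec k using 2
  ring

/-- Warm-started inner gradient-descent loops keep the inner error uniformly bounded. -/
theorem stmt_16 {d n : ℕ}
    (g : EuclideanSpace ℝ (Fin d) → EuclideanSpace ℝ (Fin n) → ℝ)
    (μ ℓ κ η G : ℝ) (hμ : 0 < μ) (hμℓ : μ ≤ ℓ) (hκ : κ = ℓ / μ)
    (hη : 0 ≤ η) (hG : 0 ≤ G)
    (hsc : ∀ x, StrongConvexOn Set.univ μ (g x))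
    (GY : EuclideanSpace ℝ (Fin d) → EuclideanSpace ℝ (Fin n) → EuclideanSpace ℝ (Fin n))
    (hGY : ∀ x y, HasGradientAt (g x) (GY x y) y)
    (hGYlip : ∀ x y y', ‖GY x y - GY x y'‖ ≤ ℓ * ‖y - y'‖)
    (ystar : EuclideanSpace ℝ (Fin d) → EuclideanSpace ℝ (Fin n))
    (hmin : ∀ x y, g x (ystar x) ≤ g x y)
    -- y*(x) is κ-Lipschitz in x
    (hystarlip : ∀ x x', ‖ystar x - ystar x'‖ ≤ κ * ‖x - x'‖)
    -- outer iterates with bounded updates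
    (x : ℕ → EuclideanSpace ℝ (Fin d))
    (hx : ∀ k, ‖x (k + 1) - x k‖ ≤ η * G)
    -- inner gradient descent with warm starts
    (D : ℕ) (hD : (1 - 1 / κ) ^ ((D : ℝ) / 2) ≤ 1 / 2)
    (Y : ℕ → ℕ → EuclideanSpace ℝ (Fin n))
    (hwarm : ∀ k, Y (k + 1) 0 = Y k D)
    (hinner : ∀ k t, Y k (t + 1) = Y k t - (1 / ℓ) • GY (x k) (Y k t)) :
    ∀ k, ‖Y k 0 - ystar (x k)‖ ≤ (1 / 2) ^ k * ‖Y 0 0 - ystar (x 0)‖ + 2 * η * κ * G :=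
  stmt_16_general g μ ℓ κ η G hμ hμℓ hκ hsc GY hGY hGYlip ystar hmin hystarlip x hx D hD Y hwarm
    hinner
end
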